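/- Let X ~ N(μ_k, σ_k² I) on ℝ^d, and suppose classes X_1,…,X_m, X_u have Gaussian densities L_i with means μ_i and covariances σ_i² I, with weights P(X_i) ≥ 0 summing to 1 (indices in {1,…,m,u}). Define the mixture likelihood L_s(x) = Σ_i P(X_i) L_i(x). If for every index i, ‖μ_k - μ_i‖² ≥ d·(σ_k² + σ_i²)·ln(2σ_k²/(σ_k²+σ_i²)), then E[L_k(X)] ≥ E[L_s(X)]. -/

import Mathlib

/-!
Completing the square, `Lᵢ Lₖ` is a Gaussian in `x` times `exp (-‖μᵢ - μₖ‖² / (2 sᵢ))`,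
where `sᵢ = σᵢ² + σₖ²`, so `E[Lᵢ(X)] = (2π sᵢ)^(-d/2) exp (-‖μᵢ - μₖ‖² / (2 sᵢ))`.
Taking logarithms, the separation condition says exactly that this is at most
`E[Lₖ(X)] = (4π σₖ²)^(-d/2)`, and `E[L_s(X)]` is a convex combination of the `E[Lᵢ(X)]`.
-/

open MeasureTheory Real

/-- Density of the isotropic Gaussian `N(μ, σ² I)` on `ℝ^d`. -/
noncomputable def gaussDensity (d : ℕ) (μ : EuclideanSpace ℝ (Fin d)) (σ : ℝ) :
    EuclideanSpace ℝ (Fin d) → ℝ :=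
  fun x => (2 * π * σ ^ 2) ^ (-(d : ℝ) / 2) * Real.exp (-‖x - μ‖ ^ 2 / (2 * σ ^ 2))

theorem mul_norm_sub_sq_add_mul_norm_sub_sq {V : Type*} [NormedAddCommGroup V]
    [InnerProductSpace ℝ V] {a b : ℝ} (hab : a + b ≠ 0) (x y z : V) :
    a * ‖x - y‖ ^ 2 + b * ‖x - z‖ ^ 2 =
      (a + b) * ‖x - ((a / (a + b)) • y + (b / (a + b)) • z)‖ ^ 2
        + a * b / (a + b) * ‖y - z‖ ^ 2 := by
  simp only [← real_inner_self_eq_norm_sq, inner_sub_left, inner_sub_right, inner_add_left,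
    inner_add_right, real_inner_smul_left, real_inner_smul_right,
    real_inner_comm x y, real_inner_comm x z, real_inner_comm z y]
  field_simp
  ring

theorem integral_exp_neg_mul_norm_sub_sq_mul_exp {V : Type*} [NormedAddCommGroup V]
    [InnerProductSpace ℝ V] [FiniteDimensional ℝ V] [MeasurableSpace V] [BorelSpace V]
    {a b : ℝ} (hab : 0 < a + b) (y z : V) :
    ∫ x, rexp (-a * ‖x - y‖ ^ 2) * rexp (-b * ‖x - z‖ ^ 2) =
      (π / (a + b)) ^ (Module.finrank ℝ V / 2 : ℝ) *
        rexp (-(a * b / (a + b)) * ‖y - z‖ ^ 2) := by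
  have hsplit (x : V) : rexp (-a * ‖x - y‖ ^ 2) * rexp (-b * ‖x - z‖ ^ 2) =
      rexp (-(a + b) * ‖x - ((a / (a + b)) • y + (b / (a + b)) • z)‖ ^ 2) *
        rexp (-(a * b / (a + b)) * ‖y - z‖ ^ 2) := by
    rw [← exp_add, ← exp_add, neg_mul, neg_mul, ← neg_add,
      mul_norm_sub_sq_add_mul_norm_sub_sq hab.ne', neg_add, neg_mul, neg_mul]
  simp_rw [hsplit]
  rw [integral_mul_const, integral_sub_right_eq_self (fun x => rexp (-(a + b) * ‖x‖ ^ 2)),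
    GaussianFourier.integral_rexp_neg_mul_sq_norm hab]

theorem gaussDensity_eq_mul_exp (d : ℕ) (μ : EuclideanSpace ℝ (Fin d)) (σ : ℝ)
    (x : EuclideanSpace ℝ (Fin d)) :
    gaussDensity d μ σ x =
      (2 * π * σ ^ 2) ^ (-(d : ℝ) / 2) * rexp (-(2 * σ ^ 2)⁻¹ * ‖x - μ‖ ^ 2) := by
  unfold gaussDensity
  congr 2
  ring

theorem integral_gaussDensity_mul_gaussDensity {d : ℕ} (μ ν : EuclideanSpace ℝ (Fin d))
    {σ τ : ℝ} (hσ : σ ≠ 0) (hτ : τ ≠ 0) :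
    ∫ x, gaussDensity d μ σ x * gaussDensity d ν τ x =
      (2 * π * (σ ^ 2 + τ ^ 2)) ^ (-(d : ℝ) / 2) *
        rexp (-‖μ - ν‖ ^ 2 / (2 * (σ ^ 2 + τ ^ 2))) := by
  simp_rw [gaussDensity_eq_mul_exp, mul_mul_mul_comm _ (rexp _)]
  rw [integral_const_mul, integral_exp_neg_mul_norm_sub_sq_mul_exp (by positivity),
    finrank_euclideanSpace_fin]
  have hprec : (2 * σ ^ 2)⁻¹ * (2 * τ ^ 2)⁻¹ / ((2 * σ ^ 2)⁻¹ + (2 * τ ^ 2)⁻¹) =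
      (2 * (σ ^ 2 + τ ^ 2))⁻¹ := by
    field_simp
    ring
  have hvol : (π / ((2 * σ ^ 2)⁻¹ + (2 * τ ^ 2)⁻¹)) ^ ((d : ℝ) / 2) =
      ((π / ((2 * σ ^ 2)⁻¹ + (2 * τ ^ 2)⁻¹))⁻¹) ^ (-(d : ℝ) / 2) := by
    rw [neg_div, rpow_neg (by positivity), inv_rpow (by positivity), inv_inv]
  rw [hprec, hvol, ← mul_assoc, ← mul_rpow (by positivity) (by positivity),
    ← mul_rpow (by positivity) (by positivity)]
  congr 2
  · field_simp
    ring
  · ring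

theorem integrable_gaussDensity_mul_gaussDensity {d : ℕ} (μ ν : EuclideanSpace ℝ (Fin d))
    {σ τ : ℝ} (hσ : σ ≠ 0) (hτ : τ ≠ 0) :
    Integrable fun x => gaussDensity d μ σ x * gaussDensity d ν τ x :=
  -- a non-integrable function has integral `0`
  .of_integral_ne_zero <| by
    rw [integral_gaussDensity_mul_gaussDensity μ ν hσ hτ]
    positivity

theorem rpow_mul_exp_le_of_log_le {d s t D : ℝ} (hs : 0 < s) (ht : 0 < t)
    (hD : d * (s + t) * log (2 * s / (s + t)) ≤ D) :
    (2 * π * (t + s)) ^ (-d / 2) * rexp (-D / (2 * (t + s))) ≤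
      (2 * π * (s + s)) ^ (-d / 2) := by
  have hts : 0 < 2 * π * (t + s) := by positivity
  have hss : 0 < 2 * π * (s + s) := by positivity
  have hlog : log (2 * π * (s + s)) = log (2 * π * (t + s)) + log (2 * s / (s + t)) := by
    rw [← log_mul hts.ne' (by positivity)]
    congr 1
    field_simp
    ring
  have hD' : d / 2 * log (2 * s / (s + t)) ≤ D / (2 * (t + s)) := by
    rw [le_div_iff₀ (by positivity)]
    linarith
  rw [rpow_def_of_pos hts, rpow_def_of_pos hss, ← exp_add, exp_le_exp, hlog]
  linarith [neg_div (2 * (t + s)) D, neg_div 2 d]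

theorem integral_gaussDensity_mul_le_of_separated {d : ℕ} (μ ν : EuclideanSpace ℝ (Fin d))
    {σ τ : ℝ} (hσ : σ ≠ 0) (hτ : τ ≠ 0)
    (hsep : ‖μ - ν‖ ^ 2 ≥ d * (σ ^ 2 + τ ^ 2) * log (2 * σ ^ 2 / (σ ^ 2 + τ ^ 2))) :
    ∫ x, gaussDensity d ν τ x * gaussDensity d μ σ x ≤
      ∫ x, gaussDensity d μ σ x * gaussDensity d μ σ x := by
  rw [integral_gaussDensity_mul_gaussDensity ν μ hτ hσ,
    integral_gaussDensity_mul_gaussDensity μ μ hσ hσ, sub_self, norm_zero,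
    zero_pow two_ne_zero, neg_zero, zero_div, exp_zero, mul_one, norm_sub_rev]
  exact rpow_mul_exp_le_of_log_le (by positivity) (by positivity) hsep

/-- The index type `Option (Fin m)` encodes the classes `{1,…,m, u}`; `none` is the class `u`. -/
theorem mle_known_vs_mixture_general (d m : ℕ)
    (μ : Option (Fin m) → EuclideanSpace ℝ (Fin d))
    (σ : Option (Fin m) → ℝ) (hσ : ∀ i, 0 < σ i)
    (P : Option (Fin m) → ℝ) (hP : ∀ i, 0 ≤ P i) (hPsum : ∑ i, P i = 1)
    (k : Fin m)
    (hsep : ∀ i, ‖μ (some k) - μ i‖ ^ 2 ≥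
      (d : ℝ) * ((σ (some k)) ^ 2 + (σ i) ^ 2) *
        Real.log (2 * (σ (some k)) ^ 2 / ((σ (some k)) ^ 2 + (σ i) ^ 2))) :
    ∫ x, gaussDensity d (μ (some k)) (σ (some k)) x *
        gaussDensity d (μ (some k)) (σ (some k)) x ≥
      ∫ x, (∑ i, P i * gaussDensity d (μ i) (σ i) x) *
        gaussDensity d (μ (some k)) (σ (some k)) x := by
  set L := fun i x => gaussDensity d (μ i) (σ i) x
  simp_rw [Finset.sum_mul, mul_assoc]
  rw [integral_finsetSum _ fun i _ => ((integrable_gaussDensity_mul_gaussDensity _ _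
    (hσ i).ne' (hσ (some k)).ne').const_mul (P i))]
  simp_rw [integral_const_mul]
  calc ∑ i, P i * ∫ x, L i x * L (some k) x
      ≤ ∑ i, P i * ∫ x, L (some k) x * L (some k) x :=
        Finset.sum_le_sum fun i _ => mul_le_mul_of_nonneg_left
          (integral_gaussDensity_mul_le_of_separated _ _ (hσ _).ne' (hσ i).ne' (hsep i)) (hP i)
    _ = ∫ x, L (some k) x * L (some k) x := by rw [← Finset.sum_mul, hPsum, one_mul]

/-- Known-class case of Theorem 3.1 (MLE): the index type `Option (Fin m)` encodes the
classes `{1,…,m, u}`, where `none` is the u.u. class `u` and `some k` a known class.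
If every pair `(k, i)` satisfies the separability condition, then
`E[Lₖ(X)] ≥ E[L_s(X)]` for `X ~ N(μₖ, σₖ² I)`, where `L_s` is the mixture. -/
theorem mle_known_vs_mixture (d m : ℕ) (hd : 1 ≤ d)
    (μ : Option (Fin m) → EuclideanSpace ℝ (Fin d))
    (σ : Option (Fin m) → ℝ) (hσ : ∀ i, 0 < σ i)
    (P : Option (Fin m) → ℝ) (hP : ∀ i, 0 ≤ P i) (hPsum : ∑ i, P i = 1)
    (k : Fin m)
    (hsep : ∀ i, ‖μ (some k) - μ i‖ ^ 2 ≥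
      (d : ℝ) * ((σ (some k)) ^ 2 + (σ i) ^ 2) *
        Real.log (2 * (σ (some k)) ^ 2 / ((σ (some k)) ^ 2 + (σ i) ^ 2))) :
    ∫ x, gaussDensity d (μ (some k)) (σ (some k)) x *
        gaussDensity d (μ (some k)) (σ (some k)) x ≥
      ∫ x, (∑ i, P i * gaussDensity d (μ i) (σ i) x) *
        gaussDensity d (μ (some k)) (σ (some k)) x :=
  mle_known_vs_mixture_general d m μ σ hσ P hP hPsum k hsep
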